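/- If I is an ideal of a skew left brace A, then Rad(I) ⊆ Rad(A), where I is considered as a skew left brace in its own right. -/

import Mathlib

/-- A skew left brace: `(A,+)` and `(A,∘)` (written `*`) are groups with
`a ∘ (b + c) = a ∘ b - a + a ∘ c`. -/
class SkewBrace (A : Type*) extends AddGroup A, Group A where
  compat : ∀ a b c : A, a * (b + c) = a * b + (-a + a * c)

namespace SkewBrace

variable {A : Type*}

/-- `λ_a (b) = -a + a ∘ b`. -/
def lam [SkewBrace A] (a b : A) : A := -a + a * b

/-- `a * b = λ_a(b) - b = -a + a∘b - b` (the brace star operation). -/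
def star [SkewBrace A] (a b : A) : A := -a + a * b - b

/-- An ideal of a skew left brace: a subgroup of `(A,+)`, normal in `(A,+)` and
`(A,∘)`, and invariant under all `λ_a`. -/
structure Ideal (A : Type*) [SkewBrace A] where
  carrier : Set A
  zero_mem : (0 : A) ∈ carrier
  add_mem : ∀ ⦃a b : A⦄, a ∈ carrier → b ∈ carrier → a + b ∈ carrier
  neg_mem : ∀ ⦃a : A⦄, a ∈ carrier → -a ∈ carrier
  add_conj_mem : ∀ (a : A) ⦃b : A⦄, b ∈ carrier → a + b + -a ∈ carrier
  mul_conj_mem : ∀ (a : A) ⦃b : A⦄, b ∈ carrier → a * b * a⁻¹ ∈ carrier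
  lam_mem : ∀ (a : A) ⦃b : A⦄, b ∈ carrier → lam a b ∈ carrier

/-- The ideal generated by a set, as a set. -/
def genIdeal [SkewBrace A] (S : Set A) : Set A :=
  {x | ∀ I : Ideal A, S ⊆ I.carrier → x ∈ I.carrier}

/-- A maximal ideal: a proper ideal such that the only ideals containing it are
itself and the whole brace. -/
def Ideal.IsMaximal [SkewBrace A] (M : Ideal A) : Prop :=
  M.carrier ≠ Set.univ ∧
    ∀ J : Ideal A, M.carrier ⊆ J.carrier → J.carrier = M.carrier ∨ J.carrier = Set.univ

/-- The radical: the intersection of all maximal ideals (the whole brace if there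
are none). -/
def radical (A : Type*) [SkewBrace A] : Set A :=
  {x | ∀ M : Ideal A, M.IsMaximal → x ∈ M.carrier}

/-- The set of all elements `a * b` (star). -/
def starSet (A : Type*) [SkewBrace A] : Set A := {x | ∃ a b : A, star a b = x}

/-- `A⁽²⁾` as the ideal generated by all `a * b`. -/
def sq (A : Type*) [SkewBrace A] : Set A := genIdeal (starSet A)

/-- `A⁽²⁾` as the additive subgroup generated by all `a * b`. -/
def sqAdd (A : Type*) [SkewBrace A] : Set A := (AddSubgroup.closure (starSet A) : Set A)

open scoped Classical in
/-- The weight of a skew left brace: the minimal number of elements generating it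
as an ideal (with `ω(0) = 1` by convention). -/
noncomputable def weight (A : Type*) [SkewBrace A] : ℕ∞ :=
  if Subsingleton A then 1
  else ⨅ (S : Finset A) (_ : genIdeal (S : Set A) = Set.univ), (S.card : ℕ∞)

/-- Artinian: every descending chain of ideals is eventually stationary. -/
def IsArtinian (A : Type*) [SkewBrace A] : Prop :=
  ∀ f : ℕ → Ideal A, (∀ n, (f (n + 1)).carrier ⊆ (f n).carrier) →
    ∃ N, ∀ n, N ≤ n → (f n).carrier = (f N).carrier

/-- A homomorphism of skew left braces. -/
structure BraceHom (A B : Type*) [SkewBrace A] [SkewBrace B] where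
  toFun : A → B
  map_add' : ∀ x y, toFun (x + y) = toFun x + toFun y
  map_mul' : ∀ x y, toFun (x * y) = toFun x * toFun y

/-- The kernel of a brace homomorphism. -/
def BraceHom.ker {A B : Type*} [SkewBrace A] [SkewBrace B] (f : BraceHom A B) : Set A :=
  {a | f.toFun a = 0}

/-- The socle `Soc(A) = Ker λ ∩ Z(A,+)`. -/
def Soc (A : Type*) [SkewBrace A] : Set A :=
  {a | (∀ b : A, lam a b = b) ∧ ∀ b : A, a + b = b + a}

/-- The annihilator `Ann(A) = Soc(A) ∩ Z(A,∘)`. -/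
def ann (A : Type*) [SkewBrace A] : Set A :=
  {a | (∀ b : A, lam a b = b) ∧ (∀ b : A, a + b = b + a) ∧ (∀ b : A, a * b = b * a)}

/-- A simple skew left brace: it has exactly two ideals, `0` and itself. -/
def IsSimple (A : Type*) [SkewBrace A] : Prop :=
  (∃ x y : A, x ≠ y) ∧ ∀ I : Ideal A, I.carrier = {(0 : A)} ∨ I.carrier = Set.univ

/-- A prime ideal `P`: the quotient `A/P` is a prime brace; internally, for all
ideals `I, J ⊇ P` with `I * J ⊆ P`, one of `I, J` equals `P`. -/
def Ideal.IsPrime [SkewBrace A] (P : Ideal A) : Prop :=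
  ∀ I J : Ideal A, P.carrier ⊆ I.carrier → P.carrier ⊆ J.carrier →
    (∀ i ∈ I.carrier, ∀ j ∈ J.carrier, star i j ∈ P.carrier) →
    I.carrier ⊆ P.carrier ∨ J.carrier ⊆ P.carrier

end SkewBrace

namespace SkewBrace

variable {A : Type*} [SkewBrace A]

theorem mul_zero' (a : A) : a * 0 = a := by
  have h := SkewBrace.compat a 0 0
  rw [add_zero] at h
  have h0 : -a + a * 0 = 0 := by
    have := (left_eq_add (a := a * 0) (b := -a + a * 0)).mp h
    exact this
  have := neg_add_eq_zero.mp h0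
  exact this.symm

theorem zero_eq_one' : (0 : A) = 1 := by
  have := mul_zero' (1 : A)
  rw [one_mul] at this
  exact this

theorem mul_eq_add_lam (a b : A) : a * b = a + lam a b := by
  simp [lam, add_neg_cancel_left]

theorem Ideal.mul_mem (I : Ideal A) {a b : A} (ha : a ∈ I.carrier) (hb : b ∈ I.carrier) :
    a * b ∈ I.carrier := by
  rw [mul_eq_add_lam]
  exact I.add_mem ha (I.lam_mem a hb)

theorem Ideal.one_mem (I : Ideal A) : (1 : A) ∈ I.carrier := by
  rw [← zero_eq_one']; exact I.zero_mem

theorem Ideal.inv_mem (I : Ideal A) {a : A} (ha : a ∈ I.carrier) : a⁻¹ ∈ I.carrier := by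
  have h : a⁻¹ + lam a⁻¹ a = 0 := by
    rw [← mul_eq_add_lam, inv_mul_cancel, ← zero_eq_one']
  have h2 : a⁻¹ = -(lam a⁻¹ a) := eq_neg_of_add_eq_zero_left h
  rw [h2]
  exact I.neg_mem (I.lam_mem a⁻¹ ha)

variable (I : Ideal A)

instance : Add {x // x ∈ I.carrier} := ⟨fun a b => ⟨a.1 + b.1, I.add_mem a.2 b.2⟩⟩
instance : Zero {x // x ∈ I.carrier} := ⟨⟨0, I.zero_mem⟩⟩
instance : Neg {x // x ∈ I.carrier} := ⟨fun a => ⟨-a.1, I.neg_mem a.2⟩⟩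
instance : Mul {x // x ∈ I.carrier} := ⟨fun a b => ⟨a.1 * b.1, I.mul_mem a.2 b.2⟩⟩
instance : One {x // x ∈ I.carrier} := ⟨⟨1, I.one_mem⟩⟩
instance : Inv {x // x ∈ I.carrier} := ⟨fun a => ⟨a.1⁻¹, I.inv_mem a.2⟩⟩

instance : AddGroup {x // x ∈ I.carrier} :=
  AddGroup.ofLeftAxioms (fun a b c => Subtype.ext (add_assoc a.1 b.1 c.1))
    (fun a => Subtype.ext (zero_add a.1)) (fun a => Subtype.ext (neg_add_cancel a.1))

instance : Group {x // x ∈ I.carrier} :=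
  Group.ofLeftAxioms (fun a b c => Subtype.ext (mul_assoc a.1 b.1 c.1))
    (fun a => Subtype.ext (one_mul a.1)) (fun a => Subtype.ext (inv_mul_cancel a.1))

/-- An ideal of a skew left brace is a skew left brace in its own right. -/
instance subBrace : SkewBrace {x // x ∈ I.carrier} :=
  { compat := fun a b c => Subtype.ext (SkewBrace.compat a.1 b.1 c.1) }


theorem lam_add' (c x y : A) : lam c (x + y) = lam c x + lam c y := by
  simp only [lam, compat c x y, add_assoc]

theorem mul_neg'' (a b : A) : a * (-b) = a + -(a * b) + a := by
  have h := compat a b (-b)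
  rw [add_neg_cancel, mul_zero'] at h
  -- h : a = a * b + (-a + a * (-b))
  have h2 : -a + a * (-b) = -(a * b) + a := by
    have := congrArg (fun z => -(a*b) + z) h
    simpa [add_assoc] using this.symm
  calc a * (-b) = a + (-a + a * (-b)) := by simp [add_assoc]
    _ = a + (-(a * b) + a) := by rw [h2]
    _ = a + -(a * b) + a := by rw [add_assoc]

theorem lam_mul' (a b x : A) : lam (a * b) x = lam a (lam b x) := by
  simp only [lam]
  rw [compat a (-b) (b * x), mul_neg'', mul_assoc]
  simp [add_assoc]

theorem lam_one' (x : A) : lam (1 : A) x = x := by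
  simp [lam, ← zero_eq_one']

theorem lam_lam_inv (m x : A) : lam m (lam m⁻¹ x) = x := by
  rw [← lam_mul', mul_inv_cancel, lam_one']

theorem mul_lam_inv (m x : A) : m * lam m⁻¹ x = m + x := by
  rw [mul_eq_add_lam, lam_lam_inv]

theorem star_add_self (a b : A) : star a b + b = lam a b := by
  simp [star, lam, sub_eq_add_neg, add_assoc]

theorem star_mem' (M : Ideal A) {a : A} (ha : a ∈ M.carrier) (b : A) :
    star a b ∈ M.carrier := by
  have hc : b⁻¹ * a * b ∈ M.carrier := by
    simpa using M.mul_conj_mem b⁻¹ ha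
  have hab : a * b = b + lam b (b⁻¹ * a * b) := by
    rw [← mul_eq_add_lam]
    group
  have : star a b = -a + (b + lam b (b⁻¹ * a * b) + -b) := by
    rw [star, hab]; simp [sub_eq_add_neg, add_assoc]
  rw [this]
  exact M.add_mem (M.neg_mem ha) (M.add_conj_mem b (M.lam_mem b hc))
/-- Given a maximal-ideal-candidate `M` and a suitable subset `S ⊆ I`, the set
`M + S` is an ideal of `A`. -/
def sumIdeal (M I : Ideal A) (S : Set A)
    (hSI : ∀ s ∈ S, s ∈ I.carrier)
    (hMIS : ∀ a ∈ M.carrier, a ∈ I.carrier → a ∈ S)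
    (h0 : (0 : A) ∈ S)
    (hadd : ∀ a ∈ S, ∀ b ∈ S, a + b ∈ S)
    (hneg : ∀ a ∈ S, -a ∈ S)
    (hconj : ∀ c : A, ∀ s ∈ S, ∃ m ∈ M.carrier, ∃ t ∈ S, c + s + -c = m + t)
    (hlam : ∀ c : A, ∀ s ∈ S, ∃ m ∈ M.carrier, ∃ t ∈ S, lam c s = m + t)
    (hmul : ∀ c : A, ∀ s ∈ S, ∃ m ∈ M.carrier, ∃ t ∈ S, c * s * c⁻¹ = m + t) :
    Ideal A where
  carrier := {a | ∃ m ∈ M.carrier, ∃ s ∈ S, a = m + s}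
  zero_mem := ⟨0, M.zero_mem, 0, h0, by rw [add_zero]⟩
  add_mem := by
    rintro a b ⟨m, hm, s, hs, rfl⟩ ⟨m', hm', s', hs', rfl⟩
    refine ⟨m + (s + m' + -s), M.add_mem hm (M.add_conj_mem s hm'),
      s + s', hadd s hs s' hs', ?_⟩
    simp [add_assoc]
  neg_mem := by
    rintro a ⟨m, hm, s, hs, rfl⟩
    refine ⟨-s + -m + s, by simpa using M.add_conj_mem (-s) (M.neg_mem hm),
      -s, hneg s hs, ?_⟩
    simp [add_assoc]
  add_conj_mem := by
    rintro c a ⟨m, hm, s, hs, rfl⟩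
    obtain ⟨m₂, hm₂, t, ht, heq⟩ := hconj c s hs
    refine ⟨c + m + -c + m₂, M.add_mem (M.add_conj_mem c hm) hm₂, t, ht, ?_⟩
    have h1 : c + (m + s) + -c = (c + m + -c) + (c + s + -c) := by
      simp [add_assoc]
    rw [h1, heq]; simp [add_assoc]
  mul_conj_mem := by
    rintro c a ⟨m, hm, s, hs, rfl⟩
    have hsI : s ∈ I.carrier := hSI s hs
    have hstarM : star m⁻¹ s ∈ M.carrier := star_mem' M (M.inv_mem hm) s
    have hstarI : star m⁻¹ s ∈ I.carrier := by
      have h1 : star m⁻¹ s = lam m⁻¹ s + -s := by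
        rw [← star_add_self]; simp [add_assoc]
      rw [h1]
      exact I.add_mem (I.lam_mem m⁻¹ hsI) (I.neg_mem hsI)
    have hs₄ : lam m⁻¹ s ∈ S := by
      rw [← star_add_self]
      exact hadd _ (hMIS _ hstarM hstarI) s hs
    have key : m + s = m * lam m⁻¹ s := (mul_lam_inv m s).symm
    obtain ⟨m₄, hm₄, t, ht, heq⟩ := hmul c (lam m⁻¹ s) hs₄
    obtain ⟨m₅, hm₅, t₆, ht₆, heq₂⟩ := hlam (c * m * c⁻¹) t ht
    refine ⟨c * m * c⁻¹ + lam (c * m * c⁻¹) m₄ + m₅,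
      M.add_mem (M.add_mem (M.mul_conj_mem c hm)
        (M.lam_mem _ hm₄)) hm₅, t₆, ht₆, ?_⟩
    calc c * (m + s) * c⁻¹ = (c * m * c⁻¹) * (c * lam m⁻¹ s * c⁻¹) := by
          rw [key]; group
      _ = (c * m * c⁻¹) * (m₄ + t) := by rw [heq]
      _ = (c * m * c⁻¹) + lam (c * m * c⁻¹) (m₄ + t) := mul_eq_add_lam _ _
      _ = (c * m * c⁻¹) + (lam (c * m * c⁻¹) m₄ + lam (c * m * c⁻¹) t) := by
          rw [lam_add']
      _ = (c * m * c⁻¹) + (lam (c * m * c⁻¹) m₄ + (m₅ + t₆)) := by rw [heq₂]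
      _ = c * m * c⁻¹ + lam (c * m * c⁻¹) m₄ + m₅ + t₆ := by simp [add_assoc]
  lam_mem := by
    rintro c a ⟨m, hm, s, hs, rfl⟩
    obtain ⟨m₂, hm₂, t, ht, heq⟩ := hlam c s hs
    refine ⟨lam c m + m₂, M.add_mem (M.lam_mem c hm) hm₂, t, ht, ?_⟩
    rw [lam_add', heq]; simp [add_assoc]
theorem exists_decomp (M I : Ideal A) (hMmax : M.IsMaximal)
    {i₀ : A} (hi₀I : i₀ ∈ I.carrier) (hi₀M : i₀ ∉ M.carrier) :
    ∀ c : A, ∃ m ∈ M.carrier, ∃ y ∈ I.carrier, c = m + y := by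
  let W : Ideal A := sumIdeal M I I.carrier (fun _ h => h) (fun _ _ h => h)
    I.zero_mem (fun _ ha _ hb => I.add_mem ha hb) (fun _ ha => I.neg_mem ha)
    (fun c s hs => ⟨0, M.zero_mem, _, I.add_conj_mem c hs, (zero_add _).symm⟩)
    (fun c s hs => ⟨0, M.zero_mem, _, I.lam_mem c hs, (zero_add _).symm⟩)
    (fun c s hs => ⟨0, M.zero_mem, _, I.mul_conj_mem c hs, (zero_add _).symm⟩)
  have hMW : M.carrier ⊆ W.carrier :=
    fun m hm => ⟨m, hm, 0, I.zero_mem, (add_zero m).symm⟩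
  rcases hMmax.2 W hMW with h | h
  · exfalso
    apply hi₀M
    have : i₀ ∈ W.carrier := ⟨0, M.zero_mem, i₀, hi₀I, (zero_add i₀).symm⟩
    rw [h] at this
    exact this
  · intro c
    have : c ∈ W.carrier := by rw [h]; trivial
    exact this

/-- The intersection `M ∩ I` as an ideal of the sub-brace `I`. -/
def interIdeal (M I : Ideal A) : Ideal {x // x ∈ I.carrier} where
  carrier := {x | x.1 ∈ M.carrier}
  zero_mem := M.zero_mem
  add_mem := fun a b ha hb => M.add_mem ha hb
  neg_mem := fun a ha => M.neg_mem ha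
  add_conj_mem := fun a b hb => M.add_conj_mem a.1 hb
  mul_conj_mem := fun a b hb => M.mul_conj_mem a.1 hb
  lam_mem := fun a b hb => M.lam_mem a.1 hb

theorem interIdeal_isMaximal (M I : Ideal A) (hMmax : M.IsMaximal)
    {i₀ : A} (hi₀I : i₀ ∈ I.carrier) (hi₀M : i₀ ∉ M.carrier) :
    (interIdeal M I).IsMaximal := by
  constructor
  · intro h
    apply hi₀M
    have : (⟨i₀, hi₀I⟩ : {x // x ∈ I.carrier}) ∈ (interIdeal M I).carrier := by
      rw [h]; trivial
    exact this
  · intro K hJK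
    set S : Set A := Subtype.val '' K.carrier with hSdef
    have hdec := exists_decomp M I hMmax hi₀I hi₀M
    have hSI : ∀ s ∈ S, s ∈ I.carrier := by rintro s ⟨⟨x, hx⟩, _, rfl⟩; exact hx
    have hmemS : ∀ (x : {x // x ∈ I.carrier}), x ∈ K.carrier → x.1 ∈ S :=
      fun x hx => ⟨x, hx, rfl⟩
    have hMIS : ∀ a ∈ M.carrier, a ∈ I.carrier → a ∈ S := fun a haM haI =>
      hmemS ⟨a, haI⟩ (hJK haM)
    have h0 : (0 : A) ∈ S := hmemS 0 K.zero_mem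
    have hadd : ∀ a ∈ S, ∀ b ∈ S, a + b ∈ S := by
      rintro a ⟨x, hx, rfl⟩ b ⟨y, hy, rfl⟩
      exact hmemS (x + y) (K.add_mem hx hy)
    have hneg : ∀ a ∈ S, -a ∈ S := by
      rintro a ⟨x, hx, rfl⟩
      exact hmemS (-x) (K.neg_mem hx)
    -- conjugation hypothesis
    have hconj : ∀ c : A, ∀ s ∈ S, ∃ m ∈ M.carrier, ∃ t ∈ S, c + s + -c = m + t := by
      rintro c s ⟨x, hx, rfl⟩
      obtain ⟨m₁, hm₁, y, hy, rfl⟩ := hdec c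
      have hk' : y + x.1 + -y ∈ S :=
        hmemS _ (K.add_conj_mem (⟨y, hy⟩ : {z // z ∈ I.carrier}) hx)
      set k' := y + x.1 + -y with hk'def
      refine ⟨m₁ + (k' + -m₁ + -k'),
        M.add_mem hm₁ (M.add_conj_mem k' (M.neg_mem hm₁)), k', hk', ?_⟩
      have e1 : m₁ + y + x.1 + -(m₁ + y) = m₁ + k' + -m₁ := by
        simp [hk'def, add_assoc]
      rw [e1]
      simp [add_assoc]
    have hlam : ∀ c : A, ∀ s ∈ S, ∃ m ∈ M.carrier, ∃ t ∈ S, lam c s = m + t := by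
      rintro c s ⟨x, hx, rfl⟩
      obtain ⟨m₁, hm₁, y, hy, rfl⟩ := hdec c
      have hy₂ : lam m₁⁻¹ y ∈ I.carrier := I.lam_mem m₁⁻¹ hy
      have hcmul : m₁ + y = m₁ * lam m₁⁻¹ y := (mul_lam_inv m₁ y).symm
      have hk₂ : lam (lam m₁⁻¹ y) x.1 ∈ S :=
        hmemS _ (K.lam_mem (⟨lam m₁⁻¹ y, hy₂⟩ : {z // z ∈ I.carrier}) hx)
      refine ⟨star m₁ (lam (lam m₁⁻¹ y) x.1), star_mem' M hm₁ _, _, hk₂, ?_⟩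
      rw [hcmul, lam_mul', star_add_self]
    have hmul : ∀ c : A, ∀ s ∈ S, ∃ m ∈ M.carrier, ∃ t ∈ S, c * s * c⁻¹ = m + t := by
      rintro c s ⟨x, hx, rfl⟩
      obtain ⟨m₁, hm₁, y, hy, rfl⟩ := hdec c
      have hy₂ : lam m₁⁻¹ y ∈ I.carrier := I.lam_mem m₁⁻¹ hy
      have hcmul : m₁ + y = m₁ * lam m₁⁻¹ y := (mul_lam_inv m₁ y).symm
      set y₂ := lam m₁⁻¹ y with hy₂def
      have hk₅ : y₂ * x.1 * y₂⁻¹ ∈ S :=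
        hmemS _ (K.mul_conj_mem (⟨y₂, hy₂⟩ : {z // z ∈ I.carrier}) hx)
      set k₅ := y₂ * x.1 * y₂⁻¹ with hk₅def
      have hm₆ : (k₅⁻¹ * m₁ * k₅) * m₁⁻¹ ∈ M.carrier :=
        M.mul_mem (by simpa using M.mul_conj_mem k₅⁻¹ hm₁) (M.inv_mem hm₁)
      set m₆ := (k₅⁻¹ * m₁ * k₅) * m₁⁻¹ with hm₆def
      have hμ : lam k₅ m₆ ∈ M.carrier := M.lam_mem k₅ hm₆
      refine ⟨k₅ + lam k₅ m₆ + -k₅, M.add_conj_mem k₅ hμ, k₅, hk₅, ?_⟩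
      have e1 : (m₁ + y) * x.1 * (m₁ + y)⁻¹ = m₁ * k₅ * m₁⁻¹ := by
        rw [hcmul, hk₅def, hy₂def]; group
      have e2 : m₁ * k₅ * m₁⁻¹ = k₅ * m₆ := by
        rw [hm₆def]; group
      rw [e1, e2, mul_eq_add_lam]
      simp [add_assoc]
    let W : Ideal A := sumIdeal M I S hSI hMIS h0 hadd hneg hconj hlam hmul
    have hMW : M.carrier ⊆ W.carrier :=
      fun m hm => ⟨m, hm, 0, h0, (add_zero m).symm⟩
    rcases hMmax.2 W hMW with h | h
    · left
      apply Set.Subset.antisymm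
      · intro x hx
        have : x.1 ∈ W.carrier := ⟨0, M.zero_mem, x.1, hmemS x hx, (zero_add _).symm⟩
        rw [h] at this
        exact this
      · exact hJK
    · right
      apply Set.eq_univ_of_forall
      intro x
      have : x.1 ∈ W.carrier := by rw [h]; trivial
      obtain ⟨m, hm, s, hsS, heq⟩ := this
      obtain ⟨k, hk, rfl⟩ := hsS
      have hmI : m ∈ I.carrier := by
        have : m = x.1 + -k.1 := by rw [heq]; simp [add_assoc]
        rw [this]
        exact I.add_mem x.2 (I.neg_mem k.2)
      have hx : x = (⟨m, hmI⟩ : {z // z ∈ I.carrier}) + k := Subtype.ext heq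
      rw [hx]
      exact K.add_mem (hJK hm) hk
/-- `Rad(I) ⊆ Rad(A)` for an ideal `I` of `A`. -/
theorem radical_ideal_subset (I : Ideal A) :
    Subtype.val '' radical {x // x ∈ I.carrier} ⊆ radical A := by
  rintro x ⟨y, hy, rfl⟩ M hM
  by_cases h : I.carrier ⊆ M.carrier
  · exact h y.2
  · obtain ⟨i₀, hi₀I, hi₀M⟩ := Set.not_subset.mp h
    exact hy (interIdeal M I) (interIdeal_isMaximal M I hM hi₀I hi₀M)

end SkewBrace
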